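/- arXiv:1402.0258 — 3 statements merged into one kernel-verified Lean document; each statement's English description precedes it below -/
import Mathlib

section
/- Fix discrete random variables $S, U_1,\dots,U_m, Y_1,\dots,Y_m$ where each $Y_i$ and each demand $f_i = f_i(S)$ is a deterministic function of $S$. For $j \in \{1,\dots,m\}$ define $K_j = \sum_{i=1}^{j-1} I(f_i; U_1^i \mid Y_1^i, f_1^{i-1}) + I(S; U_1^j \mid Y_1^j, f_1^{j-1}) + \sum_{i=j+1}^{m} I(S; U_i \mid Y_1^i, U_1^{i-1})$, where superscript notation denotes tuples, e.g., $U_1^i = (U_1,\dots,U_i)$. Then $K_1 \ge K_2 \ge \cdots \ge K_m$. -/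
/-- Probability that a finitely-valued random variable `X` takes value `x`, under the
probability mass function `p` on the finite sample space `Ω`. -/
noncomputable def probOf {Ω α : Type*} [Fintype Ω] [DecidableEq α]
    (p : Ω → ℝ) (X : Ω → α) (x : α) : ℝ :=
  ∑ ω, if X ω = x then p ω else 0

/-- Shannon entropy (natural logarithm) of a finitely-valued random variable. -/
noncomputable def shEnt {Ω α : Type*} [Fintype Ω] [Fintype α] [DecidableEq α]
    (p : Ω → ℝ) (X : Ω → α) : ℝ :=
  -∑ x, probOf p X x * Real.log (probOf p X x)

/-- Conditional Shannon entropy `H(X | Y)`. -/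
noncomputable def condEnt {Ω α β : Type*} [Fintype Ω] [Fintype α] [DecidableEq α]
    [Fintype β] [DecidableEq β] (p : Ω → ℝ) (X : Ω → α) (Y : Ω → β) : ℝ :=
  shEnt p (fun ω => (X ω, Y ω)) - shEnt p Y

/-- Mutual information `I(X ; Y)`. -/
noncomputable def mutInfo {Ω α β : Type*} [Fintype Ω] [Fintype α] [DecidableEq α]
    [Fintype β] [DecidableEq β] (p : Ω → ℝ) (X : Ω → α) (Y : Ω → β) : ℝ :=
  shEnt p X + shEnt p Y - shEnt p (fun ω => (X ω, Y ω))

/-- Conditional mutual information `I(X ; Y | Z)`. -/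
noncomputable def condMutInfo {Ω α β γ : Type*} [Fintype Ω] [Fintype α] [DecidableEq α]
    [Fintype β] [DecidableEq β] [Fintype γ] [DecidableEq γ]
    (p : Ω → ℝ) (X : Ω → α) (Y : Ω → β) (Z : Ω → γ) : ℝ :=
  condEnt p X Z - condEnt p X (fun ω => (Y ω, Z ω))

/-- The quantity `K_j` of Lemma 3 (1-indexed in the paper; variables are 0-indexed here,
so the paper's `U_i` is `U (i-1)` etc., and prefix tuples `U_1^i` are `fun t : Fin i => U t`):
`K j = ∑_{i=1}^{j-1} I(f_i; U_1^i | Y_1^i, f_1^{i-1}) + I(S; U_1^j | Y_1^j, f_1^{j-1})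
       + ∑_{i=j+1}^m I(S; U_i | Y_1^i, U_1^{i-1})`. -/
noncomputable def Kval {Ω σT υ αT βT : Type*} [Fintype Ω] [Fintype σT] [DecidableEq σT]
    [Fintype υ] [DecidableEq υ] [Fintype αT] [DecidableEq αT] [Fintype βT] [DecidableEq βT]
    (p : Ω → ℝ) (m : ℕ) (S : Ω → σT) (U : ℕ → Ω → υ) (Y : ℕ → Ω → αT) (F : ℕ → Ω → βT)
    (j : ℕ) : ℝ :=
  (∑ i ∈ Finset.range (j - 1),
      condMutInfo p (F i) (fun ω => (fun t : Fin (i + 1) => U t.val ω))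
        (fun ω => ((fun t : Fin (i + 1) => Y t.val ω), (fun t : Fin i => F t.val ω))))
  + condMutInfo p S (fun ω => (fun t : Fin j => U t.val ω))
      (fun ω => ((fun t : Fin j => Y t.val ω), (fun t : Fin (j - 1) => F t.val ω)))
  + ∑ i ∈ Finset.Ico j m,
      condMutInfo p S (U i)
        (fun ω => ((fun t : Fin (i + 1) => Y t.val ω), (fun t : Fin i => U t.val ω)))

/-!
`K_{j+1} ≤ K_j` amounts to
`I(f_j; U^j | Y^j, f^{j-1}) + I(S; U^{j+1} | Y^{j+1}, f^j)
  ≤ I(S; U^j | Y^j, f^{j-1}) + I(S; U_{j+1} | Y^{j+1}, U^j)`.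
Since `f_j` is a function of `S`, `I(S; U^j | Y^j, f^{j-1})` splits as
`I(f_j; U^j | Y^j, f^{j-1}) + I(S; U^j | Y^j, f^j)`, and by the chain rule
`I(S; U^{j+1} | Y^{j+1}, f^j) = I(S; U^j | Y^{j+1}, f^j) + I(S; U_{j+1} | U^j, Y^{j+1}, f^j)`.
Conditioning further on a function `W` of `S` can only decrease `I(S; U | Z)`, because
`I(S; U | Z) = I(W; U | Z) + I(S; U | W, Z)`; with `W = Y_{j+1}` and `W = f^j` this compares the
remaining terms. Nonnegativity of conditional mutual information is Gibbs' inequality against the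
sub-probability `P(x, z) P(y, z) / P(z)`.
-/

lemma sub_mul_div_le_mul_log {a b c d : ℝ} (hc : 0 ≤ c) (hca : c ≤ a) (hcb : c ≤ b)
    (hcd : c ≤ d) :
    c - a * b / d ≤ c * (Real.log c + Real.log d - Real.log a - Real.log b) := by
  rcases hc.eq_or_lt with rfl | hc
  · simpa using div_nonneg (mul_nonneg hca hcb) hcd
  have ha := hc.trans_le hca
  have hb := hc.trans_le hcb
  have hd := hc.trans_le hcd
  have hlog := Real.log_le_sub_one_of_pos (x := a * b / (c * d)) (by positivity)
  rw [Real.log_div (by positivity) (by positivity), Real.log_mul ha.ne' hb.ne',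
    Real.log_mul hc.ne' hd.ne'] at hlog
  have hmul : c * (a * b / (c * d) - 1) = a * b / d - c := by field_simp
  nlinarith

section Probability

variable {Ω α β : Type*} [Fintype Ω]

lemma probOf_nonneg [DecidableEq α] {p : Ω → ℝ} (hp0 : ∀ ω, 0 ≤ p ω) (X : Ω → α) (x : α) :
    0 ≤ probOf p X x :=
  Finset.sum_nonneg fun ω _ => by split_ifs <;> simp [hp0 ω]

lemma sum_mul_comp_eq_sum_probOf_mul [Fintype α] [DecidableEq α] (p : Ω → ℝ) (V : Ω → α)
    (f : α → ℝ) : ∑ ω, p ω * f (V ω) = ∑ v, probOf p V v * f v := by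
  simp only [probOf, Finset.sum_mul, ite_mul, zero_mul]
  rw [Finset.sum_comm]
  simp

lemma sum_probOf [Fintype α] [DecidableEq α] (p : Ω → ℝ) (V : Ω → α) :
    ∑ v, probOf p V v = ∑ ω, p ω := by
  simpa using (sum_mul_comp_eq_sum_probOf_mul p V fun _ => 1).symm

lemma sum_probOf_prod_fst [Fintype α] [DecidableEq α] [DecidableEq β] (p : Ω → ℝ)
    (X : Ω → α) (Z : Ω → β) (z : β) :
    ∑ x, probOf p (fun ω => (X ω, Z ω)) (x, z) = probOf p Z z := by
  unfold probOf
  rw [Finset.sum_comm]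
  refine Finset.sum_congr rfl fun ω _ => ?_
  by_cases h : Z ω = z <;> simp [Prod.ext_iff, h]

lemma probOf_le_probOf_comp [DecidableEq α] [DecidableEq β] {p : Ω → ℝ} (hp0 : ∀ ω, 0 ≤ p ω)
    {V : Ω → α} {W : Ω → β} {g : α → β} (hW : ∀ ω, W ω = g (V ω)) (v : α) :
    probOf p V v ≤ probOf p W (g v) :=
  Finset.sum_le_sum fun ω _ => by
    by_cases h : V ω = v
    · simp [h, hW]
    · split_ifs <;> simp [hp0 ω]

lemma shEnt_eq_neg_sum_log [Fintype α] [DecidableEq α] (p : Ω → ℝ) (X : Ω → α) :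
    shEnt p X = -∑ ω, p ω * Real.log (probOf p X (X ω)) := by
  rw [shEnt, sum_mul_comp_eq_sum_probOf_mul p X fun x => Real.log (probOf p X x)]

lemma shEnt_eq_neg_sum_probOf_mul_log [Fintype α] [DecidableEq α] [Fintype β] [DecidableEq β]
    (p : Ω → ℝ) {V : Ω → α} {W : Ω → β} {g : α → β} (hW : ∀ ω, W ω = g (V ω)) :
    shEnt p W = -∑ v, probOf p V v * Real.log (probOf p W (g v)) := by
  simp only [shEnt_eq_neg_sum_log, hW]
  rw [sum_mul_comp_eq_sum_probOf_mul p V fun v => Real.log (probOf p W (g v))]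

end Probability

def SameFibers {Ω α β : Type*} (X : Ω → α) (Y : Ω → β) : Prop :=
  ∀ ω ω', X ω = X ω' ↔ Y ω = Y ω'

namespace SameFibers

variable {Ω α β γ δ : Type*}

lemma refl (X : Ω → α) : SameFibers X X := fun _ _ => Iff.rfl

lemma symm {X : Ω → α} {Y : Ω → β} (h : SameFibers X Y) : SameFibers Y X :=
  fun ω ω' => (h ω ω').symm

lemma prod {X : Ω → α} {X' : Ω → β} {Y : Ω → γ} {Y' : Ω → δ}
    (hX : SameFibers X X') (hY : SameFibers Y Y') :
    SameFibers (fun ω => (X ω, Y ω)) (fun ω => (X' ω, Y' ω)) := fun ω ω' => by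
  simp only [Prod.ext_iff, hX ω ω', hY ω ω']

lemma pair_of_comp {S : Ω → α} {W : Ω → β} {g : α → β} (hW : ∀ ω, W ω = g (S ω)) :
    SameFibers S (fun ω => (W ω, S ω)) := fun ω ω' => by
  simp only [Prod.ext_iff, hW, iff_and_self]
  exact congrArg g

lemma prefix_succ (G : ℕ → Ω → α) (n : ℕ) :
    SameFibers (fun ω (t : Fin (n + 1)) => G t ω)
      (fun ω => ((fun t : Fin n => G t ω), G n ω)) := fun ω ω' => by
  simp [funext_iff, Prod.ext_iff, Fin.forall_fin_succ']

end SameFibers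

section Information

variable {Ω σ α β γ δ : Type*} [Fintype Ω] [Fintype σ] [DecidableEq σ]
  [Fintype α] [DecidableEq α] [Fintype β] [DecidableEq β]
  [Fintype γ] [DecidableEq γ] [Fintype δ] [DecidableEq δ]

lemma shEnt_congr (p : Ω → ℝ) {X : Ω → α} {Y : Ω → β} (h : SameFibers X Y) :
    shEnt p X = shEnt p Y := by
  simp only [shEnt_eq_neg_sum_log]
  congr 2 with ω
  unfold probOf
  simp only [h _ ω]

lemma condMutInfo_eq_shEnt (p : Ω → ℝ) (X : Ω → α) (Y : Ω → β) (Z : Ω → γ) :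
    condMutInfo p X Y Z =
      shEnt p (fun ω => (X ω, Z ω)) + shEnt p (fun ω => (Y ω, Z ω))
        - shEnt p (fun ω => (X ω, (Y ω, Z ω))) - shEnt p Z := by
  unfold condMutInfo condEnt
  ring

lemma condMutInfo_congr {α' β' γ' : Type*}
    [Fintype α'] [DecidableEq α'] [Fintype β'] [DecidableEq β'] [Fintype γ'] [DecidableEq γ']
    (p : Ω → ℝ) {X : Ω → α} {X' : Ω → α'} {Y : Ω → β} {Y' : Ω → β'} {Z : Ω → γ} {Z' : Ω → γ'}
    (hX : SameFibers X X') (hY : SameFibers Y Y') (hZ : SameFibers Z Z') :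
    condMutInfo p X Y Z = condMutInfo p X' Y' Z' := by
  simp only [condMutInfo_eq_shEnt, shEnt_congr p (hX.prod hZ), shEnt_congr p (hY.prod hZ),
    shEnt_congr p (hX.prod (hY.prod hZ)), shEnt_congr p hZ]

lemma condMutInfo_comm (p : Ω → ℝ) (X : Ω → α) (Y : Ω → β) (Z : Ω → γ) :
    condMutInfo p X Y Z = condMutInfo p Y X Z := by
  have hswap : SameFibers (fun ω => (X ω, (Y ω, Z ω))) (fun ω => (Y ω, (X ω, Z ω))) :=
    fun ω ω' => by simp only [Prod.ext_iff]; tauto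
  rw [condMutInfo_eq_shEnt, condMutInfo_eq_shEnt, shEnt_congr p hswap]
  ring

lemma condMutInfo_prod_right (p : Ω → ℝ) (X : Ω → α) (A : Ω → β) (B : Ω → γ) (Z : Ω → δ) :
    condMutInfo p X (fun ω => (A ω, B ω)) Z
      = condMutInfo p X A Z + condMutInfo p X B (fun ω => (A ω, Z ω)) := by
  have h₁ : SameFibers (fun ω => (X ω, ((A ω, B ω), Z ω))) (fun ω => (X ω, (B ω, (A ω, Z ω)))) :=
    fun ω ω' => by simp only [Prod.ext_iff]; tauto
  have h₂ : SameFibers (fun ω => ((A ω, B ω), Z ω)) (fun ω => (B ω, (A ω, Z ω))) :=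
    fun ω ω' => by simp only [Prod.ext_iff]; tauto
  simp only [condMutInfo_eq_shEnt, shEnt_congr p h₁, shEnt_congr p h₂]
  ring

lemma condMutInfo_eq_add_of_comp (p : Ω → ℝ) {S : Ω → σ} {W : Ω → β} {g : σ → β}
    (hW : ∀ ω, W ω = g (S ω)) (U : Ω → γ) (Z : Ω → δ) :
    condMutInfo p S U Z = condMutInfo p W U Z + condMutInfo p S U (fun ω => (W ω, Z ω)) := by
  rw [condMutInfo_congr p (SameFibers.pair_of_comp hW) (.refl U) (.refl Z),
    condMutInfo_comm, condMutInfo_prod_right, condMutInfo_comm p U W, condMutInfo_comm p U S]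

lemma sum_probOf_mul_probOf_div_le_one {p : Ω → ℝ} (hp0 : ∀ ω, 0 ≤ p ω)
    (hp1 : ∑ ω, p ω = 1) (X : Ω → α) (Y : Ω → β) (Z : Ω → γ) :
    ∑ v : α × β × γ, probOf p (fun ω => (X ω, Z ω)) (v.1, v.2.2)
        * probOf p (fun ω => (Y ω, Z ω)) v.2 / probOf p Z v.2.2 ≤ 1 := by
  calc ∑ v : α × β × γ, probOf p (fun ω => (X ω, Z ω)) (v.1, v.2.2)
          * probOf p (fun ω => (Y ω, Z ω)) v.2 / probOf p Z v.2.2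
      = ∑ yz : β × γ, probOf p (fun ω => (Y ω, Z ω)) yz / probOf p Z yz.2
          * ∑ x, probOf p (fun ω => (X ω, Z ω)) (x, yz.2) := by
        rw [Fintype.sum_prod_type, Finset.sum_comm]
        simp only [Finset.mul_sum]
        refine Finset.sum_congr rfl fun _ _ => Finset.sum_congr rfl fun _ _ => ?_
        ring
    _ ≤ ∑ yz : β × γ, probOf p (fun ω => (Y ω, Z ω)) yz := by
        refine Finset.sum_le_sum fun yz _ => ?_
        rw [sum_probOf_prod_fst]
        rcases (probOf_nonneg hp0 Z yz.2).eq_or_lt with h | h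
        · rw [← h, mul_zero]
          exact probOf_nonneg hp0 _ _
        · rw [div_mul_cancel₀ _ h.ne']
    _ = 1 := by rw [sum_probOf, hp1]

lemma condMutInfo_eq_sum_probOf_mul_log (p : Ω → ℝ) (X : Ω → α) (Y : Ω → β) (Z : Ω → γ) :
    condMutInfo p X Y Z = ∑ v : α × β × γ, probOf p (fun ω => (X ω, (Y ω, Z ω))) v *
      (Real.log (probOf p (fun ω => (X ω, (Y ω, Z ω))) v) + Real.log (probOf p Z v.2.2)
        - Real.log (probOf p (fun ω => (X ω, Z ω)) (v.1, v.2.2))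
        - Real.log (probOf p (fun ω => (Y ω, Z ω)) v.2)) := by
  set V := fun ω => (X ω, (Y ω, Z ω))
  rw [condMutInfo_eq_shEnt,
    shEnt_eq_neg_sum_probOf_mul_log p (V := V) (W := fun ω => (X ω, Z ω))
      (g := fun v => (v.1, v.2.2)) (fun _ => rfl),
    shEnt_eq_neg_sum_probOf_mul_log p (V := V) (W := fun ω => (Y ω, Z ω)) (g := Prod.snd)
      (fun _ => rfl),
    shEnt_eq_neg_sum_probOf_mul_log p (V := V) (W := V) (g := id) (fun _ => rfl),
    shEnt_eq_neg_sum_probOf_mul_log p (V := V) (W := Z) (g := fun v => v.2.2)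
      (fun _ => rfl)]
  simp only [id, mul_add, mul_sub, Finset.sum_add_distrib, Finset.sum_sub_distrib]
  ring

lemma condMutInfo_nonneg {p : Ω → ℝ} (hp0 : ∀ ω, 0 ≤ p ω) (hp1 : ∑ ω, p ω = 1)
    (X : Ω → α) (Y : Ω → β) (Z : Ω → γ) : 0 ≤ condMutInfo p X Y Z := by
  set V := fun ω => (X ω, (Y ω, Z ω))
  have hpoint (v : α × β × γ) := sub_mul_div_le_mul_log (probOf_nonneg hp0 V v)
    (probOf_le_probOf_comp hp0 (V := V) (W := fun ω => (X ω, Z ω))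
      (g := fun v => (v.1, v.2.2)) (fun _ => rfl) v)
    (probOf_le_probOf_comp hp0 (V := V) (W := fun ω => (Y ω, Z ω)) (g := Prod.snd)
      (fun _ => rfl) v)
    (probOf_le_probOf_comp hp0 (V := V) (W := Z) (g := fun v => v.2.2) (fun _ => rfl) v)
  rw [condMutInfo_eq_sum_probOf_mul_log]
  refine le_trans ?_ (Finset.sum_le_sum fun v _ => hpoint v)
  rw [Finset.sum_sub_distrib, sum_probOf, hp1]
  linarith [sum_probOf_mul_probOf_div_le_one hp0 hp1 X Y Z]

lemma condMutInfo_le_of_comp {p : Ω → ℝ} (hp0 : ∀ ω, 0 ≤ p ω) (hp1 : ∑ ω, p ω = 1)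
    {S : Ω → σ} {W : Ω → β} {g : σ → β} (hW : ∀ ω, W ω = g (S ω)) (U : Ω → α)
    {Z : Ω → γ} {Z' : Ω → δ} (hZ' : SameFibers Z' (fun ω => (W ω, Z ω))) :
    condMutInfo p S U Z' ≤ condMutInfo p S U Z := by
  rw [condMutInfo_congr p (.refl S) (.refl U) hZ', condMutInfo_eq_add_of_comp p hW U Z]
  linarith [condMutInfo_nonneg hp0 hp1 W U Z]

end Information

section IndexCoding

variable {Ω σ μ ν α α' β β' : Type*} [Fintype Ω] [Fintype σ] [DecidableEq σ]
  [Fintype μ] [DecidableEq μ] [Fintype ν] [DecidableEq ν]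
  [Fintype α] [DecidableEq α] [Fintype α'] [DecidableEq α']
  [Fintype β] [DecidableEq β] [Fintype β'] [DecidableEq β']

lemma condMutInfo_demand_add_le {p : Ω → ℝ} (hp0 : ∀ ω, 0 ≤ p ω) (hp1 : ∑ ω, p ω = 1)
    {S : Ω → σ} (Uold : Ω → μ) (Unew : Ω → ν) (Yold : Ω → α) {Ynew : Ω → α'}
    {Fold : Ω → β} {Fnew : Ω → β'} {gY : σ → α'} {gFold : σ → β} {gFnew : σ → β'}
    (hYnew : ∀ ω, Ynew ω = gY (S ω)) (hFold : ∀ ω, Fold ω = gFold (S ω))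
    (hFnew : ∀ ω, Fnew ω = gFnew (S ω)) :
    condMutInfo p Fnew Uold (fun ω => (Yold ω, Fold ω))
        + condMutInfo p S (fun ω => (Uold ω, Unew ω))
            (fun ω => ((Yold ω, Ynew ω), (Fold ω, Fnew ω)))
      ≤ condMutInfo p S Uold (fun ω => (Yold ω, Fold ω))
        + condMutInfo p S Unew (fun ω => ((Yold ω, Ynew ω), Uold ω)) := by
  have hFnew_split := condMutInfo_eq_add_of_comp p hFnew Uold (fun ω => (Yold ω, Fold ω))
  have hYnew_le : condMutInfo p S Uold (fun ω => ((Yold ω, Ynew ω), (Fold ω, Fnew ω)))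
      ≤ condMutInfo p S Uold (fun ω => (Fnew ω, (Yold ω, Fold ω))) :=
    condMutInfo_le_of_comp hp0 hp1 hYnew Uold fun ω ω' => by simp only [Prod.ext_iff]; tauto
  have hFold_le : condMutInfo p S Unew (fun ω => (Uold ω, ((Yold ω, Ynew ω), (Fold ω, Fnew ω))))
      ≤ condMutInfo p S Unew (fun ω => ((Yold ω, Ynew ω), Uold ω)) :=
    condMutInfo_le_of_comp hp0 hp1 (W := fun ω => (Fold ω, Fnew ω))
      (g := fun s => (gFold s, gFnew s)) (fun ω => by rw [hFold, hFnew]) Unew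
      fun ω ω' => by simp only [Prod.ext_iff]; tauto
  rw [hFnew_split, condMutInfo_prod_right]
  linarith

variable {Ω σT υ αT βT : Type*} [Fintype Ω] [Fintype σT] [DecidableEq σT]
  [Fintype υ] [DecidableEq υ] [Fintype αT] [DecidableEq αT] [Fintype βT] [DecidableEq βT]

lemma Kval_succ_le {p : Ω → ℝ} (hp0 : ∀ ω, 0 ≤ p ω) (hp1 : ∑ ω, p ω = 1)
    {m : ℕ} {S : Ω → σT} (U : ℕ → Ω → υ) {Y : ℕ → Ω → αT} {F : ℕ → Ω → βT}
    {ymap : ℕ → σT → αT} {fmap : ℕ → σT → βT}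
    (hY : ∀ i ω, Y i ω = ymap i (S ω)) (hF : ∀ i ω, F i ω = fmap i (S ω))
    {n : ℕ} (hn : n + 1 + 1 ≤ m) :
    Kval p m S U Y F (n + 1 + 1) ≤ Kval p m S U Y F (n + 1) := by
  have hstep := condMutInfo_demand_add_le hp0 hp1 (S := S) (fun ω (t : Fin (n + 1)) => U t ω)
    (U (n + 1)) (fun ω (t : Fin (n + 1)) => Y t ω) (hY (n + 1))
    (gFold := fun s (t : Fin n) => fmap t s) (fun ω => funext fun t => hF t ω) (hF n)
  rw [condMutInfo_congr p (.refl S) (SameFibers.prefix_succ U (n + 1)).symm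
      ((SameFibers.prefix_succ Y (n + 1)).symm.prod (SameFibers.prefix_succ F n).symm),
    condMutInfo_congr p (.refl S) (.refl _)
      ((SameFibers.prefix_succ Y (n + 1)).symm.prod (.refl _))] at hstep
  -- `dsimp` also rewrites the binder type `Fin (n + 1 + 1 - 1)`, which `simp` would leave alone.
  dsimp only [Kval, Nat.add_one_sub_one]
  simp only [Finset.sum_range_succ,
    Finset.sum_eq_sum_Ico_succ_bot (show n + 1 < m by omega)]
  linarith

end IndexCoding

/-- if each side information `Y i` and each demand `F i` is a deterministic
function of the source `S`, then `K_1 ≥ K_2 ≥ ⋯ ≥ K_m`. -/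
theorem Kval_antitone {Ω σT υ αT βT : Type*} [Fintype Ω] [Fintype σT] [DecidableEq σT]
    [Fintype υ] [DecidableEq υ] [Fintype αT] [DecidableEq αT] [Fintype βT] [DecidableEq βT]
    (p : Ω → ℝ) (hp0 : ∀ ω, 0 ≤ p ω) (hp1 : ∑ ω, p ω = 1)
    (m : ℕ) (S : Ω → σT) (U : ℕ → Ω → υ) (Y : ℕ → Ω → αT) (F : ℕ → Ω → βT)
    (ymap : ℕ → σT → αT) (fmap : ℕ → σT → βT)
    (hY : ∀ i ω, Y i ω = ymap i (S ω)) (hF : ∀ i ω, F i ω = fmap i (S ω)) :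
    ∀ j k : ℕ, 1 ≤ j → j ≤ k → k ≤ m →
      Kval p m S U Y F k ≤ Kval p m S U Y F j := by
  intro j k hj hjk
  induction k, hjk using Nat.le_induction with
  | base => exact fun _ => le_rfl
  | succ k hjk ih =>
    intro hkm
    obtain ⟨n, rfl⟩ : ∃ n, k = n + 1 := ⟨k - 1, by omega⟩
    exact (Kval_succ_le hp0 hp1 U hY hF hkm).trans (ih (by omega))
end

section
/- Let $S$ be a finite set of source bits, $m \ge 1$, with demand sets $f_i \subseteq S$ and side-information sets $Y_i \subseteq S$ ($f_i \cap Y_i = \emptyset$). Suppose every bit of $S$ is demanded by at least one decoder and the instance satisfies the covering condition: every $s \in S$ lies in $Y_i$ for either all $i$, no $i$, all but one $i$, or all but two $i$. For $i \in \{1,\dots,m\}$ let $g_i = f_i \setminus \{ s \in f_i : s \text{ is demanded only by decoder } i \text{ and is side information at exactly } m-2 \text{ decoders} \}$, and for $i \ne j$ let $a_{ij} = \{s \in S : s \text{ is demanded only by decoder } j \text{ and } s \notin Y_i \cup Y_j,\ s \in Y_k \ \forall k \notin \{i,j\}\}$. Then the quantity $R_i = |(g_1 \cup \cdots \cup g_{i-1}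 \cup f_i \cup g_{i+1} \cup \cdots \cup g_m) \setminus Y_i| + \max_{j \ne i} |a_{ij}|$ satisfies: $\max_i R_i$ is a lower bound on the size of any zero-error index code message alphabet exponent, i.e., for every function $\phi : (\mathbb{Z}/2)^S \to T$ and decoding functions $g_i$ with $g_i(\phi(x), x|_{Y_i}) = x|_{f_i}$ for all $x$, one has $\log_2 |T| \ge \max_i R_i$. -/
/-!
Fix a decoder `i`, let `B` be the bits of `g_1 ∪ ⋯ ∪ f_i ∪ ⋯ ∪ g_m` unknown to `i`, and let
`A = a_{ij}` for some `j ≠ i`. The covering condition forces every bit of `B` outside `f i` to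
be side information at no decoder at all. Hence, once the bits outside `B ∪ A` are fixed, the
codeword determines everything in `B ∪ A`: decoder `i` recovers `f i`, then decoder `j`
(whose side information inside `B ∪ A` lies in `f i`) recovers `A`, and then each remaining bit
of `B` is recovered by any decoder demanding it. So the `2 ^ |B ∪ A|` patterns on `B ∪ A` have
distinct codewords.
-/

open Finset

section IndexCode

variable {σ ι α T : Type*} {f Y : ι → Finset σ}

def IsZeroErrorIndexCode (φ : (σ → α) → T)
    (dec : (i : ι) → T → ({s // s ∈ Y i} → α) → ({s // s ∈ f i} → α)) : Prop :=
  ∀ i x, dec i (φ x) (fun s => x s.1) = fun s => x s.1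

variable {φ : (σ → α) → T} {dec : (i : ι) → T → ({s // s ∈ Y i} → α) → ({s // s ∈ f i} → α)}

theorem eqOn_demand_of_eqOn_side (hdec : IsZeroErrorIndexCode φ dec)
    {x x' : σ → α} (hφ : φ x = φ x') {t : ι} (hY : Set.EqOn x x' (Y t)) :
    Set.EqOn x x' (f t) := by
  intro s hs
  have hside : (fun u : {s // s ∈ Y t} => x u.1) = fun u => x' u.1 := funext fun u => hY u.2
  calc x s = dec t (φ x) (fun u => x u.1) ⟨s, hs⟩ := (congrFun (hdec t x) ⟨s, hs⟩).symm
    _ = dec t (φ x') (fun u => x' u.1) ⟨s, hs⟩ := by rw [hφ, hside]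
    _ = x' s := congrFun (hdec t x') ⟨s, hs⟩

theorem card_pow_card_le_of_eqOn [DecidableEq σ] [Fintype α] [Inhabited α] [Fintype T]
    (C : Finset σ) (hC : ∀ x x', φ x = φ x' → Set.EqOn x x' (↑C)ᶜ → Set.EqOn x x' C) :
    Fintype.card α ^ #C ≤ Fintype.card T := by
  let extend : ({s // s ∈ C} → α) → σ → α := fun v s => if h : s ∈ C then v ⟨s, h⟩ else default
  have hinj : Function.Injective (φ ∘ extend) := by
    intro v w hvw
    have hoff : Set.EqOn (extend v) (extend w) (↑C)ᶜ := fun s hs => by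
      simp only [extend, dif_neg (show s ∉ C from hs)]
    funext u
    simpa [extend, dif_pos u.2] using hC _ _ hvw hoff u.2
  simpa [Fintype.card_fun] using Fintype.card_le_of_injective _ hinj

theorem eqOn_of_decoding_chain [DecidableEq σ] (hdec : IsZeroErrorIndexCode φ dec)
    {i j : ι} {C : Finset σ} (hi : Disjoint C (Y i)) (hj : C ∩ Y j ⊆ f i)
    (hC : ∀ s ∈ C, ∃ t, s ∈ f t ∧ C ∩ Y t ⊆ f i ∪ f j) :
    ∀ x x', φ x = φ x' → Set.EqOn x x' (↑C)ᶜ → Set.EqOn x x' C := by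
  intro x x' hφ hoff
  have recover : ∀ {t D}, C ∩ Y t ⊆ D → Set.EqOn x x' D → Set.EqOn x x' (f t) :=
    fun {t D} hD hxD => eqOn_demand_of_eqOn_side hdec hφ fun s hs => by
      by_cases hsC : s ∈ C
      · exact hxD (hD (mem_inter.2 ⟨hsC, hs⟩))
      · exact hoff hsC
  have hfi : Set.EqOn x x' (f i) :=
    recover (disjoint_iff_inter_eq_empty.1 hi).subset (by simp)
  have hfj : Set.EqOn x x' (f j) := recover hj hfi
  intro s hs
  obtain ⟨t, hst, ht⟩ := hC s hs
  exact recover ht (by rw [coe_union]; exact hfi.union hfj) hst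

theorem card_pow_card_add_card_le [DecidableEq σ] [Fintype α] [Inhabited α] [Fintype T]
    (hdec : IsZeroErrorIndexCode φ dec) (hdem : ∀ s, ∃ t, s ∈ f t) {i j : ι}
    {B A : Finset σ} (hBi : Disjoint B (Y i)) (hB : ∀ u, B ∩ Y u ⊆ f i) (hA : A ⊆ f j)
    (hAi : Disjoint A (Y i)) (hAj : Disjoint A (Y j)) (hBA : Disjoint B A) :
    Fintype.card α ^ (#B + #A) ≤ Fintype.card T := by
  rw [← card_union_of_disjoint hBA]
  refine card_pow_card_le_of_eqOn _
    (eqOn_of_decoding_chain hdec (i := i) (j := j) ?_ ?_ fun s _ => ?_)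
  · exact disjoint_union_left.2 ⟨hBi, hAi⟩
  · rw [union_inter_distrib_right, disjoint_iff_inter_eq_empty.1 hAj, union_empty]
    exact hB j
  · obtain ⟨t, hst⟩ := hdem s
    refine ⟨t, hst, ?_⟩
    rw [union_inter_distrib_right]
    exact union_subset_union (hB t) (inter_subset_left.trans hA)

end IndexCode

theorem natCast_le_logb_two_of_two_pow_le {n k : ℕ} (h : 2 ^ n ≤ k) :
    (n : ℝ) ≤ Real.logb 2 k := by
  rw [Real.le_logb_iff_rpow_le one_lt_two (by exact_mod_cast (Nat.two_pow_pos n).trans_le h),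
    Real.rpow_natCast]
  exact_mod_cast h

section Instance

variable {σ : Type*} [DecidableEq σ] {m : ℕ} (f Y : Fin m → Finset σ)

/-- The paper's `g t`. -/
def trimmedDemand (t : Fin m) : Finset σ :=
  (f t).filter fun s => ¬ ((∀ u, s ∈ f u → u = t) ∧ #{u | s ∈ Y u} = m - 2)

/-- `(g_1 ∪ ⋯ ∪ g_{i-1} ∪ f_i ∪ g_{i+1} ∪ ⋯ ∪ g_m) \ Y_i`. -/
def unknownDemand (i : Fin m) : Finset σ :=
  (univ.biUnion fun t => if t = i then f i else trimmedDemand f Y t) \ Y i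

variable {f Y}

theorem card_erase_erase_univ {i t : Fin m} (hti : t ≠ i) :
    #((univ.erase i).erase t) = m - 2 := by
  rw [card_erase_of_mem (by simpa using hti), card_erase_of_mem (mem_univ i), card_univ,
    Fintype.card_fin]
  omega

theorem side_subset_erase_erase {s : σ} {i t : Fin m} (hi : s ∉ Y i) (ht : s ∉ Y t) :
    ({u | s ∈ Y u} : Finset (Fin m)) ⊆ (univ.erase i).erase t := by
  intro u hu
  rw [mem_filter] at hu
  simp only [mem_erase, mem_univ, and_true]
  exact ⟨fun h => ht (h ▸ hu.2), fun h => hi (h ▸ hu.2)⟩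

theorem card_side_le_sub_two {s : σ} {i t : Fin m} (hti : t ≠ i) (hi : s ∉ Y i) (ht : s ∉ Y t) :
    #{u | s ∈ Y u} ≤ m - 2 :=
  (card_le_card (side_subset_erase_erase hi ht)).trans_eq (card_erase_erase_univ hti)

theorem card_side_eq_sub_two_iff {s : σ} {i t : Fin m} (hti : t ≠ i) (hi : s ∉ Y i)
    (ht : s ∉ Y t) : #{u | s ∈ Y u} = m - 2 ↔ ∀ u, u ≠ i → u ≠ t → s ∈ Y u := by
  rw [← card_erase_erase_univ hti]
  constructor
  · intro hcard u hui hut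
    have hu : u ∈ (univ.erase i).erase t := by simp [hui, hut]
    rw [← eq_of_subset_of_card_le (side_subset_erase_erase hi ht) hcard.ge] at hu
    exact (mem_filter.1 hu).2
  · intro hall
    congr 1
    refine subset_antisymm (side_subset_erase_erase hi ht) fun u hu => ?_
    simp only [mem_erase, mem_univ, and_true] at hu
    exact mem_filter.2 ⟨mem_univ u, hall u hu.2 hu.1⟩

theorem disjoint_unknownDemand_side {i : Fin m} : Disjoint (unknownDemand f Y i) (Y i) :=
  sdiff_disjoint

theorem unknownDemand_inter_side_subset (hdisj : ∀ i, Disjoint (f i) (Y i))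
    (hcover : ∀ s : σ, #{u | s ∈ Y u} = 0 ∨ #{u | s ∈ Y u} = m ∨ #{u | s ∈ Y u} = m - 1 ∨
      #{u | s ∈ Y u} = m - 2) (i u : Fin m) :
    unknownDemand f Y i ∩ Y u ⊆ f i := by
  intro s hs
  obtain ⟨hsB, hsYu⟩ := mem_inter.1 hs
  obtain ⟨hs, hsYi⟩ := mem_sdiff.1 hsB
  obtain ⟨t, -, hst⟩ := mem_biUnion.1 hs
  by_contra hsi
  have hti : t ≠ i := by rintro rfl; exact hsi (by simpa using hst)
  rw [if_neg hti, trimmedDemand, mem_filter] at hst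
  obtain ⟨hsft, hnot⟩ := hst
  have hsYt : s ∉ Y t := disjoint_left.1 (hdisj t) hsft
  have hle := card_side_le_sub_two hti hsYi hsYt
  have hpos : 0 < #{u | s ∈ Y u} := card_pos.2 ⟨u, by simpa using hsYu⟩
  have hcount : #{u | s ∈ Y u} = m - 2 := by rcases hcover s with h | h | h | h <;> omega
  refine hnot ⟨fun v hv => ?_, hcount⟩
  by_contra hvt
  have hvi : v ≠ i := by rintro rfl; exact hsi hv
  exact disjoint_left.1 (hdisj v) hv
    ((card_side_eq_sub_two_iff hti hsYi hsYt).1 hcount v hvi hvt)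

section Fintype

variable [Fintype σ] {i j : Fin m}

/-- The paper's `a_{ij}`. -/
def pairExclusive (f Y : Fin m → Finset σ) (i j : Fin m) : Finset σ :=
  {s | s ∈ f j ∧ (∀ u, s ∈ f u → u = j) ∧ s ∉ Y i ∧ s ∉ Y j ∧ ∀ u, u ≠ i → u ≠ j → s ∈ Y u}

theorem disjoint_unknownDemand_pairExclusive (hji : j ≠ i) :
    Disjoint (unknownDemand f Y i) (pairExclusive f Y i j) := by
  refine disjoint_right.2 fun s hsA hsB => ?_
  obtain ⟨-, hsfj, honly, hsYi, hsYj, hrest⟩ := mem_filter.1 hsA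
  obtain ⟨t, -, hst⟩ := mem_biUnion.1 (mem_sdiff.1 hsB).1
  split_ifs at hst with hti
  · exact hji (honly i hst).symm
  · obtain rfl := honly t (mem_filter.1 hst).1
    exact (mem_filter.1 hst).2 ⟨honly, (card_side_eq_sub_two_iff hji hsYi hsYj).2 hrest⟩

theorem pairExclusive_subset : pairExclusive f Y i j ⊆ f j :=
  fun _ hs => (mem_filter.1 hs).2.1

theorem disjoint_pairExclusive_side_left : Disjoint (pairExclusive f Y i j) (Y i) :=
  disjoint_left.2 fun _ hs => (mem_filter.1 hs).2.2.2.1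

theorem disjoint_pairExclusive_side_right : Disjoint (pairExclusive f Y i j) (Y j) :=
  disjoint_left.2 fun _ hs => (mem_filter.1 hs).2.2.2.2.1

end Fintype

end Instance

theorem zero_error_converse_G0_Gm_Gm1_Gm2_general {σ : Type*} [Fintype σ] [DecidableEq σ]
    (m : ℕ) (f Y : Fin m → Finset σ)
    (hdisj : ∀ i, Disjoint (f i) (Y i))
    (hdem : ∀ s : σ, ∃ i, s ∈ f i)
    (hcover : ∀ s : σ,
      (univ.filter (fun i => s ∈ Y i)).card = 0 ∨
      (univ.filter (fun i => s ∈ Y i)).card = m ∨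
      (univ.filter (fun i => s ∈ Y i)).card = m - 1 ∨
      (univ.filter (fun i => s ∈ Y i)).card = m - 2)
    (T : Type*) [Fintype T]
    (φ : (σ → ZMod 2) → T)
    (dec : (i : Fin m) → T → ({s : σ // s ∈ Y i} → ZMod 2) → ({s : σ // s ∈ f i} → ZMod 2))
    (hdec : ∀ i x, dec i (φ x) (fun s => x s.1) = fun s => x s.1) :
    ∀ i : Fin m,
      (((univ.biUnion (fun t : Fin m =>
          if t = i then f i
          else (f t).filter (fun s => ¬ ((∀ u, s ∈ f u → u = t) ∧
            (univ.filter (fun u => s ∈ Y u)).card = m - 2)))) \ Y i).card : ℝ)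
      + (((univ.erase i).sup (fun j =>
          (univ.filter (fun s : σ =>
            s ∈ f j ∧ (∀ u, s ∈ f u → u = j) ∧ s ∉ Y i ∧ s ∉ Y j ∧
            ∀ u, u ≠ i → u ≠ j → s ∈ Y u)).card) : ℕ) : ℝ)
      ≤ Real.logb 2 (Fintype.card T) := by
  intro i
  change ((#(unknownDemand f Y i) : ℕ) : ℝ) +
    (((univ.erase i).sup fun j => #(pairExclusive f Y i j) : ℕ) : ℝ) ≤ _
  rw [← Nat.cast_add]
  refine natCast_le_logb_two_of_two_pow_le ?_
  have hB := unknownDemand_inter_side_subset hdisj hcover i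
  rcases (univ.erase i).eq_empty_or_nonempty with hnone | hsome
  · simpa [hnone] using card_pow_card_add_card_le hdec hdem (j := i) disjoint_unknownDemand_side hB
      (empty_subset _) (disjoint_empty_left _) (disjoint_empty_left _) (disjoint_empty_right _)
  · obtain ⟨j, hj, hsup⟩ := exists_mem_eq_sup _ hsome fun j => #(pairExclusive f Y i j)
    rw [hsup, ← ZMod.card 2]
    exact card_pow_card_add_card_le hdec hdem disjoint_unknownDemand_side hB pairExclusive_subset
      disjoint_pairExclusive_side_left disjoint_pairExclusive_side_right
      (disjoint_unknownDemand_pairExclusive (ne_of_mem_erase hj))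

/-- converse of Theorem 4 for instances where every source bit is side
information at all, none, all but one, or all but two of the `m` decoders. For every
zero-error index code `(φ, dec)` and every decoder `i`, the quantity
`R_i = |(g_1 ∪ ⋯ ∪ g_{i-1} ∪ f_i ∪ g_{i+1} ∪ ⋯ ∪ g_m) \ Y_i| + max_{j ≠ i} |a_{ij}|`
is a lower bound on `log₂ |T|`; hence `max_i R_i ≤ log₂ |T|`. Here
`g_t = f_t` minus the bits demanded only by `t` that are side information at exactly
`m-2` decoders, and `a_{ij}` is the set of bits demanded only by `j`, not side
information at `i` or `j`, and side information at every other decoder. -/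
theorem zero_error_converse_G0_Gm_Gm1_Gm2 {σ : Type*} [Fintype σ] [DecidableEq σ]
    (m : ℕ) (hm : 1 ≤ m) (f Y : Fin m → Finset σ)
    (hdisj : ∀ i, Disjoint (f i) (Y i))
    (hdem : ∀ s : σ, ∃ i, s ∈ f i)
    (hcover : ∀ s : σ,
      (univ.filter (fun i => s ∈ Y i)).card = 0 ∨
      (univ.filter (fun i => s ∈ Y i)).card = m ∨
      (univ.filter (fun i => s ∈ Y i)).card = m - 1 ∨
      (univ.filter (fun i => s ∈ Y i)).card = m - 2)
    (T : Type*) [Fintype T]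
    (φ : (σ → ZMod 2) → T)
    (dec : (i : Fin m) → T → ({s : σ // s ∈ Y i} → ZMod 2) → ({s : σ // s ∈ f i} → ZMod 2))
    (hdec : ∀ i x, dec i (φ x) (fun s => x s.1) = fun s => x s.1) :
    ∀ i : Fin m,
      (((univ.biUnion (fun t : Fin m =>
          if t = i then f i
          else (f t).filter (fun s => ¬ ((∀ u, s ∈ f u → u = t) ∧
            (univ.filter (fun u => s ∈ Y u)).card = m - 2)))) \ Y i).card : ℝ)
      + (((univ.erase i).sup (fun j =>
          (univ.filter (fun s : σ =>
            s ∈ f j ∧ (∀ u, s ∈ f u → u = j) ∧ s ∉ Y i ∧ s ∉ Y j ∧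
            ∀ u, u ≠ i → u ≠ j → s ∈ Y u)).card) : ℕ) : ℝ)
      ≤ Real.logb 2 (Fintype.card T) :=
  zero_error_converse_G0_Gm_Gm1_Gm2_general m f Y hdisj hdem hcover T φ dec hdec
end

section
/- Let $S$ be a finite set, $m \ge 1$, demands $f_i \subseteq S$ and side information $Y_i \subseteq S$ with $f_i \cap Y_i = \emptyset$. For any zero-error index code $\phi : (\mathbb{Z}/2)^S \to T$ (decoders recover $x|_{f_i}$ from $\phi(x)$ and $x|_{Y_i}$) and any permutation $\sigma$ of $\{1,\dots,m\}$: $\log_2|T| \ge \sum_{i=1}^m \big| f_{\sigma(i)} \setminus \big( \bigcup_{j<i} f_{\sigma(j)} \cup \bigcup_{j \le i} Y_{\sigma(j)} \big) \big|$. -/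
/-!
Process the decoders in the order given by the permutation and fix every bit outside the union
`U` of the fresh bits: those that decoder `i` demands, that no earlier decoder demands, and that
neither decoder `i` nor an earlier one knows. Two such assignments with the same codeword agree
everywhere: inductively, decoder `i` sees identical side information (a side-information bit is
either fixed or fresh for an earlier decoder), so it recovers the same demanded bits, in
particular the same fresh bits. Hence the encoder is injective on the `2 ^ |U|` assignments that
vary only on `U`, and the fresh sets are pairwise disjoint, so `|U|` is the sum in the bound.
-/

open Finset

theorem eqOn_demand_of_decoder {σ α T : Type*} {φ : (σ → α) → T} {F Z : Finset σ}
    (dec : T → ({s // s ∈ Z} → α) → ({s // s ∈ F} → α))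
    (hdec : ∀ x, dec (φ x) (fun s => x s.1) = fun s => x s.1)
    {x x' : σ → α} (hφ : φ x = φ x') (hZ : Set.EqOn x x' Z) : Set.EqOn x x' F := by
  have hrestrict : (fun s : {s // s ∈ Z} => x s.1) = fun s => x' s.1 := funext fun s => hZ s.2
  have hF : (fun s : {s // s ∈ F} => x s.1) = fun s => x' s.1 := by
    rw [← hdec x, ← hdec x', hφ, hrestrict]
  exact fun s hs => congrFun hF ⟨s, hs⟩

section FreshBits

variable {ι σ : Type*} [LinearOrder ι] [Fintype ι] [DecidableEq σ]

def freshBits (f Y : ι → Finset σ) (i : ι) : Finset σ :=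
  f i \ ((univ.filter (fun j => j < i)).biUnion f ∪ (univ.filter (fun j => j ≤ i)).biUnion Y)

variable {f Y : ι → Finset σ}

theorem freshBits_subset (i : ι) : freshBits f Y i ⊆ f i := sdiff_subset

theorem notMem_demand_of_mem_freshBits {i j : ι} (hij : i < j) {s : σ}
    (hs : s ∈ freshBits f Y j) : s ∉ f i := fun hf =>
  (mem_sdiff.mp hs).2 (mem_union_left _ (mem_biUnion.mpr ⟨i, by simpa using hij, hf⟩))

theorem notMem_sideInfo_of_mem_freshBits {i j : ι} (hij : i ≤ j) {s : σ}
    (hs : s ∈ freshBits f Y j) : s ∉ Y i := fun hY =>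
  (mem_sdiff.mp hs).2 (mem_union_right _ (mem_biUnion.mpr ⟨i, by simpa using hij, hY⟩))

theorem pairwiseDisjoint_freshBits : (Set.univ : Set ι).PairwiseDisjoint (freshBits f Y) := by
  intro i _ j _ hij
  rcases hij.lt_or_gt with h | h
  · exact disjoint_left.mpr fun s hi hj =>
      notMem_demand_of_mem_freshBits h hj (freshBits_subset i hi)
  · exact disjoint_left.mpr fun s hi hj =>
      notMem_demand_of_mem_freshBits h hi (freshBits_subset j hj)

theorem card_biUnion_freshBits :
    (univ.biUnion (freshBits f Y)).card = ∑ i, (freshBits f Y i).card :=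
  card_biUnion (by simpa using pairwiseDisjoint_freshBits)

variable {α T : Type*}

theorem eq_of_eqOn_compl_biUnion_freshBits {φ : (σ → α) → T}
    (hdecode : ∀ i x x', φ x = φ x' → Set.EqOn x x' (Y i) → Set.EqOn x x' (f i))
    {x x' : σ → α} (hφ : φ x = φ x')
    (hout : Set.EqOn x x' (↑(univ.biUnion (freshBits f Y)))ᶜ) : x = x' := by
  have hfresh : ∀ i, Set.EqOn x x' (freshBits f Y i) := by
    intro i
    induction i using WellFoundedLT.induction with
    | _ i ih =>
      refine (hdecode i x x' hφ fun t ht => ?_).mono (by simpa using freshBits_subset i)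
      by_cases hU : t ∈ univ.biUnion (freshBits f Y)
      · obtain ⟨j, -, hj⟩ := mem_biUnion.mp hU
        have hji : j < i := lt_of_not_ge fun hij => notMem_sideInfo_of_mem_freshBits hij hj ht
        exact ih j hji hj
      · exact hout hU
  funext s
  by_cases hU : s ∈ univ.biUnion (freshBits f Y)
  · obtain ⟨j, -, hj⟩ := mem_biUnion.mp hU
    exact hfresh j hj
  · exact hout hU

end FreshBits

theorem card_pow_card_le_of_eq_of_eqOn_compl {σ α T : Type*} [Fintype α] [Nonempty α]
    [Fintype T] [DecidableEq σ] {φ : (σ → α) → T} (U : Finset σ)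
    (hinj : ∀ x x', φ x = φ x' → Set.EqOn x x' (↑U)ᶜ → x = x') :
    Fintype.card α ^ U.card ≤ Fintype.card T := by
  let extend (y : U → α) : σ → α := fun s =>
    if h : s ∈ U then y ⟨s, h⟩ else Classical.arbitrary α
  have hextend : Function.Injective (φ ∘ extend) := by
    intro y y' h
    have hxx := hinj _ _ h fun s hs => by simp [extend, show s ∉ U from hs]
    funext t
    simpa [extend, t.2] using congrFun hxx t.1
  simpa [Fintype.card_fun] using Fintype.card_le_of_injective _ hextend

theorem natCast_le_logb_of_pow_le {b n k : ℕ} (hb : 1 < b) (h : b ^ n ≤ k) :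
    (n : ℝ) ≤ Real.logb b k := by
  have hk : (0 : ℝ) < k := by exact_mod_cast (Nat.pow_pos (n := n) (by omega : 0 < b)).trans_le h
  rw [Real.le_logb_iff_rpow_le (by exact_mod_cast hb) hk, Real.rpow_natCast]
  exact_mod_cast h

theorem zero_error_expanding_sequence_bound_general {σ : Type*} [Fintype σ] [DecidableEq σ]
    (m : ℕ) (f Y : Fin m → Finset σ)
    (T : Type*) [Fintype T]
    (φ : (σ → ZMod 2) → T)
    (dec : (i : Fin m) → T → ({s : σ // s ∈ Y i} → ZMod 2) → ({s : σ // s ∈ f i} → ZMod 2))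
    (hdec : ∀ i x, dec i (φ x) (fun s => x s.1) = fun s => x s.1) :
    ∀ σp : Equiv.Perm (Fin m),
      ((∑ i : Fin m,
        (f (σp i) \
          ((univ.filter (fun j => j < i)).biUnion (fun j => f (σp j)) ∪
           (univ.filter (fun j => j ≤ i)).biUnion (fun j => Y (σp j)))).card : ℕ) : ℝ)
      ≤ Real.logb 2 (Fintype.card T) := by
  intro σp
  have hcard := card_pow_card_le_of_eq_of_eqOn_compl (φ := φ)
    (univ.biUnion (freshBits (fun j => f (σp j)) (fun j => Y (σp j))))
    fun x x' hφ hout => eq_of_eqOn_compl_biUnion_freshBits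
      (fun i _ _ => eqOn_demand_of_decoder (dec (σp i)) (hdec (σp i))) hφ hout
  rw [ZMod.card, card_biUnion_freshBits] at hcard
  exact natCast_le_logb_of_pow_le (by norm_num) hcard

/-- zero-error expanding-sequence (DSM+) lower bound. For every
zero-error index code `(φ, dec)` and every permutation `σp` of the decoders,
`log₂ |T| ≥ ∑_i |f_{σ(i)} \ (∪_{j<i} f_{σ(j)} ∪ ∪_{j≤i} Y_{σ(j)})|`. -/
theorem zero_error_expanding_sequence_bound {σ : Type*} [Fintype σ] [DecidableEq σ]
    (m : ℕ) (f Y : Fin m → Finset σ)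
    (hdisj : ∀ i, Disjoint (f i) (Y i))
    (T : Type*) [Fintype T]
    (φ : (σ → ZMod 2) → T)
    (dec : (i : Fin m) → T → ({s : σ // s ∈ Y i} → ZMod 2) → ({s : σ // s ∈ f i} → ZMod 2))
    (hdec : ∀ i x, dec i (φ x) (fun s => x s.1) = fun s => x s.1) :
    ∀ σp : Equiv.Perm (Fin m),
      ((∑ i : Fin m,
        (f (σp i) \
          ((univ.filter (fun j => j < i)).biUnion (fun j => f (σp j)) ∪
           (univ.filter (fun j => j ≤ i)).biUnion (fun j => Y (σp j)))).card : ℕ) : ℝ)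
      ≤ Real.logb 2 (Fintype.card T) :=
  zero_error_expanding_sequence_bound_general m f Y T φ dec hdec
end
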